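/- Commutation of transitions on parallel traces inside one location: let W = ⟨l, D, e1 | e2⟩ be a location configuration, and let t1 be a transition executed on the subtrace e1 and t2 a distinct transition executed on the subtrace e2 (both coinitial at W). Then the two transitions can be executed in either order and the two resulting derivations reach the same target configuration. -/
import Mathlib


namespace SWIRL

abbrev Loc := ℕ
abbrev Data := ℕ
abbrev Port := ℕ
abbrev StepName := ℕ

/-- Predicates (actions) of SWIRL execution traces:
`exec(s, F(s), M(s))`, `send(d↦p, l, l')`, `recv(p, l, l')`. -/
inductive Pred : Type where
  | exec (s : StepName) (ins outs : Finset Data) (locs : Finset Loc)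
  | send (d : Data) (p : Port) (src dst : Loc)
  | recv (p : Port) (src dst : Loc)
deriving DecidableEq

/-- SWIRL execution traces: the empty trace `0`, single predicates,
sequential composition `e₁.e₂` and parallel composition `e₁ | e₂`. -/
inductive Trace : Type where
  | nil
  | act (μ : Pred)
  | seq (e₁ e₂ : Trace)
  | par (e₁ e₂ : Trace)
deriving DecidableEq

/-- SWIRL workflow systems: location configurations `⟨l, D, e⟩`
and parallel composition `W₁ | W₂`. -/
inductive Sys : Type where
  | loc (l : Loc) (Dl : Finset Data) (e : Trace)
  | par (W₁ W₂ : Sys)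
deriving DecidableEq

/-- Structural congruence on traces, generated by `e|0 ≡ e`, `0.e ≡ e`,
`e.0 ≡ e` and commutativity of `|`. -/
inductive TEq : Trace → Trace → Prop where
  | parNil (e) : TEq (.par e .nil) e
  | seqNilL (e) : TEq (.seq .nil e) e
  | seqNilR (e) : TEq (.seq e .nil) e
  | parComm (e₁ e₂) : TEq (.par e₁ e₂) (.par e₂ e₁)
  | refl (e) : TEq e e
  | symm {e₁ e₂} : TEq e₁ e₂ → TEq e₂ e₁
  | trans {e₁ e₂ e₃} : TEq e₁ e₂ → TEq e₂ e₃ → TEq e₁ e₃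
  | seqCongr {e₁ e₁' e₂ e₂'} : TEq e₁ e₁' → TEq e₂ e₂' → TEq (.seq e₁ e₂) (.seq e₁' e₂')
  | parCongr {e₁ e₁' e₂ e₂'} : TEq e₁ e₁' → TEq e₂ e₂' → TEq (.par e₁ e₂) (.par e₁' e₂')

/-- Structural congruence on workflow systems. -/
inductive SEq : Sys → Sys → Prop where
  | loc (l : Loc) (Dl : Finset Data) {e e'} : TEq e e' → SEq (.loc l Dl e) (.loc l Dl e')
  | parComm (W₁ W₂) : SEq (.par W₁ W₂) (.par W₂ W₁)
  | refl (W) : SEq W W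
  | symm {W₁ W₂} : SEq W₁ W₂ → SEq W₂ W₁
  | trans {W₁ W₂ W₃} : SEq W₁ W₂ → SEq W₂ W₃ → SEq W₁ W₃
  | parCongr {W₁ W₁' W₂ W₂'} : SEq W₁ W₁' → SEq W₂ W₂' → SEq (.par W₁ W₂) (.par W₁' W₂')

/-- Labels: `τ` for communication (send/recv) steps, or an
observable exec action `ν = exec(s, F(s), M(s))`. -/
inductive Lab : Type where
  | tau
  | exec (s : StepName) (ins outs : Finset Data) (locs : Finset Loc)
deriving DecidableEq

/-- Parallel composition of a nonempty list of systems. -/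
def bigPar : Sys → List Sys → Sys
  | W, [] => W
  | W, W' :: Ws => .par W (bigPar W' Ws)

/-- The labelled reduction semantics of SWIRL (rules Exec, L-Comm, Comm,
L-Par, Seq, Par, Congr). -/
inductive Step : Lab → Sys → Sys → Prop where
  | exec (s : StepName) (ins outs : Finset Data) (locs : Finset Loc)
      (c : Loc × Finset Data × Trace) (cs : List (Loc × Finset Data × Trace))
      (hlocs : (↑((c :: cs).map Prod.fst) : Multiset Loc) = locs.val)
      (hin : ∀ x ∈ c :: cs, ins ⊆ x.2.1) :
      Step (.exec s ins outs locs)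
        (bigPar ((fun x => Sys.loc x.1 x.2.1 (.seq (.act (.exec s ins outs locs)) x.2.2)) c)
          (cs.map fun x => Sys.loc x.1 x.2.1 (.seq (.act (.exec s ins outs locs)) x.2.2)))
        (bigPar ((fun x => Sys.loc x.1 (x.2.1 ∪ outs) x.2.2) c)
          (cs.map fun x => Sys.loc x.1 (x.2.1 ∪ outs) x.2.2))
  | lcomm (l : Loc) (Dl : Finset Data) (d : Data) (p : Port) (e e' : Trace) (h : d ∈ Dl) :
      Step .tau
        (.loc l Dl (.par (.seq (.act (.send d p l l)) e) (.seq (.act (.recv p l l)) e')))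
        (.loc l Dl (.par e e'))
  | comm (l l' : Loc) (Dl Dl' : Finset Data) (d : Data) (p : Port) (e e' : Trace) (h : d ∈ Dl) :
      Step .tau
        (.par (.loc l Dl (.seq (.act (.send d p l l')) e))
              (.loc l' Dl' (.seq (.act (.recv p l l')) e')))
        (.par (.loc l Dl e) (.loc l' (insert d Dl') e'))
  | lpar {lab : Lab} {l : Loc} {Dl Dl' : Finset Data} {e₁ e₁' : Trace} (e₂ : Trace) :
      Step lab (.loc l Dl e₁) (.loc l Dl' e₁') →
      Step lab (.loc l Dl (.par e₁ e₂)) (.loc l Dl' (.par e₁' e₂))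
  | seq {lab : Lab} {l : Loc} {Dl Dl' : Finset Data} {e₁ e₁' : Trace} (e₂ : Trace) :
      Step lab (.loc l Dl e₁) (.loc l Dl' e₁') →
      Step lab (.loc l Dl (.seq e₁ e₂)) (.loc l Dl' (.seq e₁' e₂))
  | par {lab : Lab} {W₁ W₁' : Sys} (W₂ : Sys) :
      Step lab W₁ W₁' → Step lab (.par W₁ W₂) (.par W₁' W₂)
  | congr {lab : Lab} {W W₁ W₂ W' : Sys} :
      SEq W W₁ → Step lab W₁ W₂ → SEq W₂ W' → Step lab W W'

/-- Unlabelled reduction `W → W'`. -/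
def Red (W W' : Sys) : Prop := ∃ lab, Step lab W W'

/-- `⇒`: zero or more τ-labelled communication steps. -/
def Taus : Sys → Sys → Prop := Relation.ReflTransGen (Step .tau)

/-- Weak transition matching a label: finitely many (possibly zero) τ-steps,
followed by the matching action when the label is observable. -/
def Match : Lab → Sys → Sys → Prop
  | .tau => Taus
  | .exec s ins outs locs =>
      fun O O' => ∃ O₁, Taus O O₁ ∧ Step (.exec s ins outs locs) O₁ O'

/-- Keys recording the communication predicates already seen by the
optimisation scan (the set `A`). -/
inductive Key : Type where
  | send (p : Port) (src dst : Loc)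
  | recv (p : Port) (src dst : Loc)
deriving DecidableEq

/-- Sequential composition, simplified by the unit laws of structural congruence. -/
def sseq : Trace → Trace → Trace
  | .nil, e => e
  | e, .nil => e
  | e₁, e₂ => .seq e₁ e₂

/-- Parallel composition, simplified by the unit laws of structural congruence. -/
def spar : Trace → Trace → Trace
  | .nil, e => e
  | e, .nil => e
  | e₁, e₂ => .par e₁ e₂

/-- Optimisation of a single predicate: local communications (same source and
target) are replaced by `0`, as well as communications already seen in `A`;
otherwise the predicate is kept and recorded in `A`. -/
def optAct (A : Finset Key) : Pred → Trace × Finset Key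
  | .exec s ins outs locs => (.act (.exec s ins outs locs), A)
  | .send d p l l' =>
      if l = l' then (.nil, A)
      else if Key.send p l l' ∈ A then (.nil, A)
      else (.act (.send d p l l'), insert (Key.send p l l') A)
  | .recv p l l' =>
      if l = l' then (.nil, A)
      else if Key.recv p l l' ∈ A then (.nil, A)
      else (.act (.recv p l l'), insert (Key.recv p l l') A)

/-- Optimisation (the drilling function `⦃·⦄`/`[[·, A]]`) of an execution
trace with accumulator `A`. -/
def optT (A : Finset Key) : Trace → Trace × Finset Key
  | .nil => (.nil, A)
  | .act μ => optAct A μ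
  | .seq e₁ e₂ =>
      let r₁ := optT A e₁
      let r₂ := optT r₁.2 e₂
      (sseq r₁.1 r₂.1, r₂.2)
  | .par e₁ e₂ =>
      let r₁ := optT A e₁
      let r₂ := optT r₁.2 e₂
      (spar r₁.1 r₂.1, r₂.2)

/-- Optimisation of a workflow system with accumulator `A`. -/
def optSys (A : Finset Key) : Sys → Sys
  | .loc l Dl e => .loc l Dl (optT A e).1
  | .par W₁ W₂ => .par (optSys A W₁) (optSys A W₂)

/-- The optimisation function `[[·]]`. -/
def opt (W : Sys) : Sys := optSys ∅ W

/-- Barb `W ↓_ν`: `W` can immediately perform the exec action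
`ν = exec(s, F(s), M(s))`. -/
def Barb (W : Sys) (s : StepName) (ins outs : Finset Data) (locs : Finset Loc) : Prop :=
  ∃ W', Step (.exec s ins outs locs) W W'

/-- Weak barb `W ⇓_ν`: `W ⇒ ↓_ν`. -/
def WeakBarb (W : Sys) (s : StepName) (ins outs : Finset Data) (locs : Finset Loc) : Prop :=
  ∃ W₁, Taus W W₁ ∧ Barb W₁ s ins outs locs

/-- Weak barbed simulation. -/
def IsWeakBarbedSim (R : Sys → Sys → Prop) : Prop :=
  ∀ W O, R W O →
    (∀ s ins outs locs, Barb W s ins outs locs → WeakBarb O s ins outs locs) ∧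
    (∀ W', Red W W' → ∃ O', Taus O O' ∧ R W' O')

/-- Weak barbed bisimulation: both `R` and `R⁻¹` are weak barbed simulations. -/
def IsWeakBarbedBisim (R : Sys → Sys → Prop) : Prop :=
  IsWeakBarbedSim R ∧ IsWeakBarbedSim (fun O W => R W O)

/-- Weak barbed bisimilarity `≈`: the largest weak barbed bisimulation. -/
def Bisimilar (W O : Sys) : Prop := ∃ R, IsWeakBarbedBisim R ∧ R W O

/-- Shape of initial states `W_Init = ∏_j ⟨l_j, ∅, ∏_{s ∈ Q(l_j)} B(s)⟩`:
a parallel composition of location configurations with empty data sets. -/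
inductive InitShape : Sys → Prop where
  | loc (l : Loc) (e : Trace) : InitShape (.loc l ∅ e)
  | par {W₁ W₂} : InitShape W₁ → InitShape W₂ → InitShape (.par W₁ W₂)

/-- Reachability: derivable from an initial state by applying the
reduction and congruence rules. -/
def Reachable (W : Sys) : Prop :=
  ∃ W₀, InitShape W₀ ∧ Relation.ReflTransGen (fun a b => Red a b ∨ SEq a b) W₀ W

lemma seq_loc_aux {W W' : Sys} (h : SEq W W') :
    (∀ l Dl e, W = .loc l Dl e → ∃ e', W' = .loc l Dl e' ∧ TEq e e') ∧
    (∀ l Dl e, W' = .loc l Dl e → ∃ e', W = .loc l Dl e' ∧ TEq e e') := by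
  induction h with
  | loc l Dl h =>
    exact ⟨fun l' Dl' e he => by cases he; exact ⟨_, rfl, h⟩,
           fun l' Dl' e he => by cases he; exact ⟨_, rfl, h.symm⟩⟩
  | parComm => exact ⟨fun _ _ _ h => (by cases h), fun _ _ _ h => (by cases h)⟩
  | refl W =>
    exact ⟨fun l Dl e he => ⟨e, he, .refl e⟩, fun l Dl e he => ⟨e, he, .refl e⟩⟩
  | symm h ih => exact ⟨ih.2, ih.1⟩
  | trans h₁ h₂ ih₁ ih₂ =>
    refine ⟨fun l Dl e he => ?_, fun l Dl e he => ?_⟩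
    · obtain ⟨e', rfl, t⟩ := ih₁.1 l Dl e he
      obtain ⟨e'', rfl, t'⟩ := ih₂.1 l Dl e' rfl
      exact ⟨e'', rfl, t.trans t'⟩
    · obtain ⟨e', rfl, t⟩ := ih₂.2 l Dl e he
      obtain ⟨e'', rfl, t'⟩ := ih₁.2 l Dl e' rfl
      exact ⟨e'', rfl, t.trans t'⟩
  | parCongr => exact ⟨fun _ _ _ h => (by cases h), fun _ _ _ h => (by cases h)⟩

lemma seq_loc {W W' : Sys} (h : SEq W W') :
    ∀ l Dl e, W = .loc l Dl e → ∃ e', W' = .loc l Dl e' ∧ TEq e e' :=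
  (seq_loc_aux h).1

lemma step_loc {lab : Lab} {W W' : Sys} (h : Step lab W W') :
    ∀ l Dl e D e', W = .loc l Dl e → W' = .loc l D e' →
      Dl ⊆ D ∧ ∀ X, Step lab (.loc l (Dl ∪ X) e) (.loc l (D ∪ X) e') := by
  induction h with
  | exec s ins outs locs c cs hlocs hin =>
    intro l Dl e D e' hW hW'
    cases cs with
    | cons x xs => cases hW
    | nil =>
      simp only [bigPar, List.map_nil] at hW hW'
      cases hW; cases hW'
      refine ⟨Finset.subset_union_left, fun X => ?_⟩
      have := Step.exec s ins outs locs (c.1, c.2.1 ∪ X, c.2.2) [] (by simpa using hlocs)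
        (by intro y hy; simp at hy; subst hy
            exact (hin c (by simp)).trans Finset.subset_union_left)
      simp only [bigPar, List.map_nil] at this
      rw [show c.2.1 ∪ X ∪ outs = c.2.1 ∪ outs ∪ X by ac_rfl] at this
      exact this
  | lcomm l Dl d p e e' hd =>
    intro l' Dl' ee D ee' hW hW'
    cases hW; cases hW'
    exact ⟨le_rfl, fun X => Step.lcomm _ _ _ _ _ _ (Finset.mem_union_left _ hd)⟩
  | comm => intro _ _ _ _ _ h; cases h
  | lpar e₂ hst ih =>
    intro l' Dl' ee D ee' hW hW'
    cases hW; cases hW'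
    obtain ⟨hsub, hw⟩ := ih _ _ _ _ _ rfl rfl
    exact ⟨hsub, fun X => Step.lpar e₂ (hw X)⟩
  | seq e₂ hst ih =>
    intro l' Dl' ee D ee' hW hW'
    cases hW; cases hW'
    obtain ⟨hsub, hw⟩ := ih _ _ _ _ _ rfl rfl
    exact ⟨hsub, fun X => Step.seq e₂ (hw X)⟩
  | par => intro _ _ _ _ _ h; cases h
  | congr h₁ hst h₂ ih =>
    intro l Dl e D e' hW hW'
    subst hW; subst hW'
    obtain ⟨ea, rfl, ta⟩ := seq_loc h₁ l Dl e rfl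
    obtain ⟨eb, rfl, tb⟩ := seq_loc h₂.symm l D e' rfl
    obtain ⟨hsub, hw⟩ := ih _ _ _ _ _ rfl rfl
    refine ⟨hsub, fun X => ?_⟩
    exact Step.congr (SEq.loc l (Dl ∪ X) ta) (hw X) (SEq.loc l (D ∪ X) tb.symm)

/-- **Commutation of transitions on parallel traces inside one location**:
for `W = ⟨l, D, e₁ | e₂⟩`, a transition `t₁` executed on the subtrace `e₁`
and a distinct transition `t₂` executed on the subtrace `e₂` (both coinitial
at `W`) can be executed in either order, and the two derivations reach the
same target configuration. -/
theorem parallel_traces_commute {l : Loc} {Dl D₁ D₂ : Finset Data}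
    {e₁ e₂ e₁' e₂' : Trace}
    (t₁ : Red (.loc l Dl e₁) (.loc l D₁ e₁'))
    (t₂ : Red (.loc l Dl e₂) (.loc l D₂ e₂')) :
    Red (.loc l Dl (.par e₁ e₂)) (.loc l D₁ (.par e₁' e₂)) ∧
    Red (.loc l Dl (.par e₁ e₂)) (.loc l D₂ (.par e₁ e₂')) ∧
    ∃ D₃ : Finset Data,
      Red (.loc l D₁ (.par e₁' e₂)) (.loc l D₃ (.par e₁' e₂')) ∧
      Red (.loc l D₂ (.par e₁ e₂')) (.loc l D₃ (.par e₁' e₂')) := by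
  obtain ⟨lab₁, s₁⟩ := t₁
  obtain ⟨lab₂, s₂⟩ := t₂
  obtain ⟨hsub₁, hw₁⟩ := step_loc s₁ _ _ _ _ _ rfl rfl
  obtain ⟨hsub₂, hw₂⟩ := step_loc s₂ _ _ _ _ _ rfl rfl
  -- a step on the right component of a par, via congruence with parComm
  have rstep : ∀ {lab : Lab} {D D' : Finset Data} {a b b' : Trace},
      Step lab (.loc l D b) (.loc l D' b') →
      Step lab (.loc l D (.par a b)) (.loc l D' (.par a b')) := by
    intro lab D D' a b b' h
    exact Step.congr (SEq.loc l D (TEq.parComm a b)) (Step.lpar a h)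
      (SEq.loc l D' (TEq.parComm b' a))
  refine ⟨⟨lab₁, Step.lpar e₂ s₁⟩, ⟨lab₂, rstep s₂⟩, D₁ ∪ D₂, ⟨lab₂, ?_⟩, ⟨lab₁, ?_⟩⟩
  · have := rstep (a := e₁') (hw₂ D₁)
    rwa [Finset.union_eq_right.mpr hsub₁, Finset.union_comm] at this
  · have := Step.lpar (e₂ := e₂') (hw₁ D₂)
    rwa [Finset.union_eq_right.mpr hsub₂] at this

end SWIRL
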